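/- For any miner j ≠ i with Δ < x_j*, the individual griefing factor of the deviation x_i* + Δ against j exceeds 1: the utility loss of miner j caused by miner i's deviation from Nash equilibrium to x_i* + Δ is strictly larger than miner i's own utility loss. -/

import Mathlib

/-!
At the equilibrium the total hash rate is `1 / c*`. When miner `i` adds `Δ`, miner `j` only
loses share: its loss is `x_j* Δ / (S (S + Δ))` with `S = 1 / c*`, i.e. `Δ (c* - c_j) / (1 + c* Δ)`.
Miner `i` gains share but pays `c_i Δ`, for a net loss of `Δ² c_i c* / (1 + c* Δ)`. Comparing
numerators, the claim reduces to `Δ c_i c* < c* - c_j`, which follows from `c_i < c*` and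
`Δ < x_j* = (c* - c_j) / c*²`.
-/

open Finset

/-- Payoff of miner `i` in the mining game with costs `c` and allocations `x`. -/
noncomputable def payoff {n : ℕ} (c x : Fin n → ℝ) (i : Fin n) : ℝ :=
  x i / (∑ k, x k) - c i * x i

theorem sum_update_add {ι : Type*} [Fintype ι] [DecidableEq ι] (x : ι → ℝ) (i : ι) (Δ : ℝ) :
    ∑ k, Function.update x i (x i + Δ) k = ∑ k, x k + Δ := by
  rw [sum_update_of_mem (mem_univ i), sdiff_singleton_eq_erase, ← add_sum_erase _ _ (mem_univ i)]
  ring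

theorem sum_equilibrium {ι : Type*} [Fintype ι] (c : ι → ℝ) {s : ℝ} (hs : s ≠ 0)
    (hsum : ∑ k, c k = s * (Fintype.card ι - 1)) :
    ∑ k, (1 - c k / s) / s = 1 / s := by
  rw [← sum_div, sum_sub_distrib, ← sum_div, hsum]
  simp only [sum_const, card_univ, nsmul_eq_mul, mul_one]
  field_simp
  ring

section Deviation

variable {n : ℕ} (c x : Fin n → ℝ) (i : Fin n) (Δ : ℝ)

theorem payoff_sub_payoff_update_self :
    payoff c x i - payoff c (Function.update x i (x i + Δ)) i
      = x i / ∑ k, x k - (x i + Δ) / (∑ k, x k + Δ) + c i * Δ := by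
  simp only [payoff, sum_update_add, Function.update_self]
  ring

theorem payoff_sub_payoff_update_of_ne {j : Fin n} (hji : j ≠ i) :
    payoff c x j - payoff c (Function.update x i (x i + Δ)) j
      = x j / ∑ k, x k - x j / (∑ k, x k + Δ) := by
  simp only [payoff, sum_update_add, Function.update_of_ne hji]
  ring

end Deviation

section Equilibrium

variable {s Δ : ℝ}

theorem equilibrium_own_loss (hs : s ≠ 0) (hsΔ : 1 + s * Δ ≠ 0) (a : ℝ) :
    (1 - a / s) / s / (1 / s) - ((1 - a / s) / s + Δ) / (1 / s + Δ) + a * Δ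
      = Δ ^ 2 * a * s / (1 + s * Δ) := by
  field_simp
  ring

theorem equilibrium_other_loss (hs : s ≠ 0) (hsΔ : 1 + s * Δ ≠ 0) (b : ℝ) :
    (1 - b / s) / s / (1 / s) - (1 - b / s) / s / (1 / s + Δ) = Δ * (s - b) / (1 + s * Δ) := by
  field_simp
  ring

theorem equilibrium_own_loss_lt_other_loss {a b : ℝ} (hs : 0 < s) (hΔ : 0 < Δ) (ha : a < s)
    (hΔb : Δ < (1 - b / s) / s) :
    Δ ^ 2 * a * s / (1 + s * Δ) < Δ * (s - b) / (1 + s * Δ) := by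
  have hΔb' : Δ * s ^ 2 < s - b := by
    have hxb : (1 - b / s) / s = (s - b) / s ^ 2 := by field_simp
    rwa [hxb, lt_div_iff₀ (by positivity)] at hΔb
  have hsΔ : 0 < 1 + s * Δ := by positivity
  refine (div_lt_div_iff_of_pos_right hsΔ).2 ?_
  calc Δ ^ 2 * a * s = Δ * (Δ * s * a) := by ring
    _ < Δ * (Δ * s * s) := by gcongr
    _ = Δ * (Δ * s ^ 2) := by ring
    _ < Δ * (s - b) := by gcongr

end Equilibrium

/-- for any miner `j ≠ i` with `Δ < x_j*`, miner `j`'s loss caused by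
miner `i`'s deviation to `x_i* + Δ` strictly exceeds miner `i`'s own loss
(individual griefing factor exceeds 1). -/
theorem individual_griefing_factor_exceeds_one (n : ℕ) (hn : 2 ≤ n)
    (c : Fin n → ℝ) (hc : ∀ i, 0 < c i)
    (cstar : ℝ) (hcstar : cstar = (∑ k, c k) / ((n : ℝ) - 1))
    (hpart : ∀ i, c i < cstar)
    (xstar : Fin n → ℝ) (hx : ∀ i, xstar i = (1 - c i / cstar) / cstar)
    (i j : Fin n) (hij : j ≠ i) (Δ : ℝ) (hΔ : 0 < Δ) (hΔj : Δ < xstar j) :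
    payoff c xstar i - payoff c (Function.update xstar i (xstar i + Δ)) i
      < payoff c xstar j - payoff c (Function.update xstar i (xstar i + Δ)) j := by
  obtain rfl : xstar = fun k => (1 - c k / cstar) / cstar := funext hx
  have hs : 0 < cstar := (hc i).trans (hpart i)
  have hn1 : (n : ℝ) - 1 ≠ 0 := by
    have : (2 : ℝ) ≤ n := by exact_mod_cast hn
    linarith
  have hsum : ∑ k, (1 - c k / cstar) / cstar = 1 / cstar :=
    sum_equilibrium c hs.ne' (by rw [Fintype.card_fin, hcstar, div_mul_cancel₀ _ hn1])
  have hsΔ : 1 + cstar * Δ ≠ 0 := by positivity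
  rw [payoff_sub_payoff_update_self, payoff_sub_payoff_update_of_ne _ _ _ _ hij, hsum,
    equilibrium_own_loss hs.ne' hsΔ, equilibrium_other_loss hs.ne' hsΔ]
  exact equilibrium_own_loss_lt_other_loss hs hΔ (hpart i) hΔj
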